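/- Let n ≥ 1, let S₀, …, S_{n−1} ∈ Im ℍ be purely imaginary quaternions, let λ, ρ ∈ ℝ, and set U_k = [[λ, −ρ − S_k],[ρ + S_k, λ]]. Let H = U_{n−1}⋯U_1·U_0 be their ordered product. Then detC(H) = ∏_{k=0}^{n−1} ((λ + ρ·i)² − ‖S_k‖²) in ℂ, where for a quaternionic 2×2 matrix A we define trC(A) = 2·Re(A₀₀) + 2·Re(A₁₀)·i ∈ ℂ and detC(A) = (1/2)·((trC A)² − trC(A²)). In particular detC(H) vanishes precisely when ρ = 0 and λ = ±‖S_k‖ for some k. -/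

import Mathlib

open Quaternion

/-- The matrix `[[λ, −ρ − S],[ρ + S, λ]]` appearing in the Lax pair. -/
noncomputable def laxMat (S : ℍ[ℝ]) (lam rho : ℝ) : Matrix (Fin 2) (Fin 2) ℍ[ℝ] :=
  !![(lam : ℍ[ℝ]), -(rho : ℍ[ℝ]) - S; (rho : ℍ[ℝ]) + S, (lam : ℍ[ℝ])]

/-- The ordered product `A_{k−1} ⋯ A_1 · A_0` of a sequence of matrices. -/
noncomputable def ordProd (A : ℕ → Matrix (Fin 2) (Fin 2) ℍ[ℝ]) :
    ℕ → Matrix (Fin 2) (Fin 2) ℍ[ℝ]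
  | 0 => 1
  | k + 1 => A k * ordProd A k

/-- The complex trace of a quaternionic 2×2 matrix:
`trC(A) = 2·Re(A₀₀) + 2·Re(A₁₀)·i`. -/
noncomputable def trC (A : Matrix (Fin 2) (Fin 2) ℍ[ℝ]) : ℂ :=
  (2 * (A 0 0).re : ℝ) + (2 * (A 1 0).re : ℝ) * Complex.I

/-- The complex determinant of a quaternionic 2×2 matrix:
`detC(A) = (1/2)·((trC A)² − trC(A²))`. -/
noncomputable def detC (A : Matrix (Fin 2) (Fin 2) ℍ[ℝ]) : ℂ :=
  (1 / 2 : ℂ) * ((trC A) ^ 2 - trC (A * A))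

/-!
A biquaternion `q ∈ ℍ[ℂ]` splits as `q = a + i b` with `a, b ∈ ℍ[ℝ]`, and `q ↦ [[a, -b], [b, a]]`
is multiplicative (the same computation as for the embedding of `ℂ` into real `2 × 2` matrices).
Under it `trC` becomes `2 Re` and `detC` becomes the complex norm form `normSq`. The matrix `U_k`
is the image of `λ + i (ρ + S_k)`, whose norm form is `(λ + ρ i)² - ‖S_k‖²` because `S_k` is
purely imaginary; multiplicativity of `normSq` then gives `detC H` as the product.
-/

namespace Quaternion

@[simps]
noncomputable def complexRe (q : ℍ[ℂ]) : ℍ[ℝ] := ⟨q.re.re, q.imI.re, q.imJ.re, q.imK.re⟩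

@[simps]
noncomputable def complexIm (q : ℍ[ℂ]) : ℍ[ℝ] := ⟨q.re.im, q.imI.im, q.imJ.im, q.imK.im⟩

def ofComplexParts (a b : ℍ[ℝ]) : ℍ[ℂ] :=
  ⟨⟨a.re, b.re⟩, ⟨a.imI, b.imI⟩, ⟨a.imJ, b.imJ⟩, ⟨a.imK, b.imK⟩⟩

@[simp] lemma complexRe_ofComplexParts (a b : ℍ[ℝ]) : complexRe (ofComplexParts a b) = a := rfl

@[simp] lemma complexIm_ofComplexParts (a b : ℍ[ℝ]) : complexIm (ofComplexParts a b) = b := rfl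

lemma complexRe_mul (p q : ℍ[ℂ]) :
    complexRe (p * q) = complexRe p * complexRe q - complexIm p * complexIm q := by
  ext <;> simp [re_mul, imI_mul, imJ_mul, imK_mul] <;> ring

lemma complexIm_mul (p q : ℍ[ℂ]) :
    complexIm (p * q) = complexRe p * complexIm q + complexIm p * complexRe q := by
  ext <;> simp [re_mul, imI_mul, imJ_mul, imK_mul] <;> ring

noncomputable def toMatrix : ℍ[ℂ] →* Matrix (Fin 2) (Fin 2) ℍ[ℝ] where
  toFun q := !![complexRe q, -complexIm q; complexIm q, complexRe q]
  map_one' := by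
    have hre : complexRe 1 = 1 := by ext <;> simp
    have him : complexIm 1 = 0 := by ext <;> simp
    rw [hre, him, neg_zero, Matrix.one_fin_two]
  map_mul' p q := by
    refine Matrix.ext fun i j => ?_
    fin_cases i <;> fin_cases j <;> simp [complexRe_mul, complexIm_mul] <;> abel

lemma toMatrix_apply (q : ℍ[ℂ]) :
    toMatrix q = !![complexRe q, -complexIm q; complexIm q, complexRe q] := rfl

lemma trC_toMatrix (q : ℍ[ℂ]) : trC (toMatrix q) = 2 * q.re := by
  simp [trC, toMatrix_apply, Complex.ext_iff]

lemma detC_toMatrix (q : ℍ[ℂ]) : detC (toMatrix q) = normSq q := by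
  rw [detC, ← map_mul, trC_toMatrix, trC_toMatrix, normSq_def', re_mul]
  ring

end Quaternion

open Quaternion

lemma laxMat_eq_toMatrix (S : ℍ[ℝ]) (lam rho : ℝ) :
    laxMat S lam rho = toMatrix (ofComplexParts lam (rho + S)) := by
  rw [laxMat, toMatrix_apply, complexRe_ofComplexParts, complexIm_ofComplexParts,
    neg_add, sub_eq_add_neg]

lemma normSq_ofComplexParts_coe_coe_add (S : ℍ[ℝ]) (hS : S.re = 0) (lam rho : ℝ) :
    normSq (ofComplexParts lam (rho + S)) =
      ((lam : ℂ) + (rho : ℂ) * Complex.I) ^ 2 - ((‖S‖ ^ 2 : ℝ) : ℂ) := by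
  rw [sq ‖S‖, ← normSq_eq_norm_mul_self, normSq_def', normSq_def']
  apply Complex.ext <;> simp [ofComplexParts, hS, sq]; ring

def revProd {M : Type*} [Monoid M] (f : ℕ → M) : ℕ → M
  | 0 => 1
  | k + 1 => f k * revProd f k

lemma ordProd_eq_revProd (A : ℕ → Matrix (Fin 2) (Fin 2) ℍ[ℝ]) (n : ℕ) :
    ordProd A n = revProd A n := by
  induction n with
  | zero => rfl
  | succ k ih => rw [ordProd, revProd, ih]

lemma map_revProd {M N F : Type*} [Monoid M] [Monoid N] [FunLike F M N] [MonoidHomClass F M N]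
    (φ : F) (f : ℕ → M) (n : ℕ) : φ (revProd f n) = revProd (φ ∘ f) n := by
  induction n with
  | zero => exact map_one φ
  | succ k ih => rw [revProd, revProd, map_mul, ih, Function.comp_apply]

lemma revProd_eq_prod_range {M : Type*} [CommMonoid M] (f : ℕ → M) (n : ℕ) :
    revProd f n = ∏ k ∈ Finset.range n, f k := by
  induction n with
  | zero => rfl
  | succ k ih => rw [revProd, ih, Finset.prod_range_succ, mul_comm]

lemma add_mul_I_sq_sub_sq_eq_zero_iff (lam rho s : ℝ) :
    ((lam : ℂ) + (rho : ℂ) * Complex.I) ^ 2 - ((s ^ 2 : ℝ) : ℂ) = 0 ↔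
      rho = 0 ∧ (lam = s ∨ lam = -s) := by
  rw [sub_eq_zero, Complex.ofReal_pow, sq_eq_sq_iff_eq_or_eq_neg]
  simp only [Complex.ext_iff, Complex.add_re, Complex.add_im, Complex.mul_re, Complex.mul_im,
    Complex.ofReal_re, Complex.ofReal_im, Complex.I_re, Complex.I_im, Complex.neg_re,
    Complex.neg_im]
  constructor
  · rintro (⟨hre, him⟩ | ⟨hre, him⟩) <;> refine ⟨by linarith, by simp_all⟩
  · rintro ⟨rfl, rfl | rfl⟩ <;> simp

theorem detC_of_monodromy_general
    (n : ℕ) (S : ℕ → ℍ[ℝ]) (hS : ∀ k < n, (S k).re = 0)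
    (lam rho : ℝ) :
    detC (ordProd (fun k => laxMat (S k) lam rho) n) =
        ∏ k ∈ Finset.range n,
          (((lam : ℂ) + (rho : ℂ) * Complex.I) ^ 2 - ((‖S k‖ ^ 2 : ℝ) : ℂ)) ∧
      (detC (ordProd (fun k => laxMat (S k) lam rho) n) = 0 ↔
        ∃ k < n, rho = 0 ∧ (lam = ‖S k‖ ∨ lam = -‖S k‖)) := by
  have hdet : detC (ordProd (fun k => laxMat (S k) lam rho) n) =
      ∏ k ∈ Finset.range n,
        (((lam : ℂ) + (rho : ℂ) * Complex.I) ^ 2 - ((‖S k‖ ^ 2 : ℝ) : ℂ)) := by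
    simp only [ordProd_eq_revProd, laxMat_eq_toMatrix]
    rw [← Function.comp_def toMatrix, ← map_revProd, detC_toMatrix, map_revProd,
      revProd_eq_prod_range]
    exact Finset.prod_congr rfl fun k hk =>
      normSq_ofComplexParts_coe_coe_add (S k) (hS k (Finset.mem_range.mp hk)) lam rho
  refine ⟨hdet, ?_⟩
  simp only [hdet, Finset.prod_eq_zero_iff, add_mul_I_sq_sub_sq_eq_zero_iff, Finset.mem_range]

theorem detC_of_monodromy
    (n : ℕ) (hn : 1 ≤ n) (S : ℕ → ℍ[ℝ]) (hS : ∀ k < n, (S k).re = 0)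
    (lam rho : ℝ) :
    detC (ordProd (fun k => laxMat (S k) lam rho) n) =
        ∏ k ∈ Finset.range n,
          (((lam : ℂ) + (rho : ℂ) * Complex.I) ^ 2 - ((‖S k‖ ^ 2 : ℝ) : ℂ)) ∧
      (detC (ordProd (fun k => laxMat (S k) lam rho) n) = 0 ↔
        ∃ k < n, rho = 0 ∧ (lam = ‖S k‖ ∨ lam = -‖S k‖)) :=
  detC_of_monodromy_general n S hS lam rho
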